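/- arXiv:2409.04412 — 6 statements merged into one kernel-verified Lean document; each statement's English description precedes it below -/
import Mathlib

section
/- Let (Ω, 𝓕, P) be a probability space and Y : Ω → ℝ a bounded measurable random variable with π := P(Y = esssup Y) > 0. For s > 0 let Q^s denote the exponentially tilted probability measure with density dQ^s/dP = e^{sY} / E_P[e^{sY}]. Then D_KL(Q^s ‖ P) tends to log(1/π) as s → +∞. -/
/-!
Write `M = esssup Y`. Tilting is unchanged by adding a constant to the exponent, so `Q^s` is also
the tilt by `f_s = s (Y - M) ≤ 0`, and then
`D_KL(Q^s ‖ P) = E[f_s e^{f_s}] / E[e^{f_s}] - log E[e^{f_s}]`.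
As `s → ∞`, `e^{f_s} → 1_{Y = M}` and `f_s e^{f_s} → 0` almost surely, with the bounds `1` and
`e^{-1}`, so by dominated convergence the two expectations tend to `π` and `0`.
-/

open MeasureTheory Real Filter Set Classical

/-- Kullback–Leibler divergence: `E_P[(dQ/dP) log (dQ/dP)]` if `Q ≪ P`, and `+∞` otherwise. -/
noncomputable def KLdiv {Ω : Type*} [MeasurableSpace Ω] (Q P : Measure Ω) : EReal :=
  if Q ≪ P then
    ((∫ ω, (Q.rnDeriv P ω).toReal * Real.log (Q.rnDeriv P ω).toReal ∂P : ℝ) : EReal)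
  else ⊤

lemma Real.tendsto_mul_exp_atBot_nhds_zero : Tendsto (fun x : ℝ ↦ x * exp x) atBot (nhds 0) := by
  have h := ((tendsto_pow_mul_exp_neg_atTop_nhds_zero 1).comp tendsto_neg_atBot_atTop).neg
  simpa [Function.comp_def] using h

lemma Real.abs_mul_exp_le_exp_neg_one {x : ℝ} (hx : x ≤ 0) : |x * exp x| ≤ exp (-1) := by
  simpa [abs_mul, abs_of_nonpos hx] using mul_exp_neg_le_exp_neg_one (-x)

namespace MeasureTheory

variable {Ω : Type*} [MeasurableSpace Ω] {μ : Measure Ω}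

lemma tilted_add_const (f : Ω → ℝ) (c : ℝ) : μ.tilted (fun ω ↦ f ω + c) = μ.tilted f := by
  simp_rw [Measure.tilted, exp_add, integral_mul_const, mul_div_mul_right _ _ (exp_pos c).ne']

lemma KLdiv_tilted_self [SigmaFinite μ] [NeZero μ] {f : Ω → ℝ}
    (hexp : Integrable (fun ω ↦ exp (f ω)) μ) (hfexp : Integrable (fun ω ↦ f ω * exp (f ω)) μ) :
    KLdiv (μ.tilted f) μ = (((∫ ω, f ω * exp (f ω) ∂μ) / ∫ ω, exp (f ω) ∂μ
      - log (∫ ω, exp (f ω) ∂μ) : ℝ) : EReal) := by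
  have hac := tilted_absolutelyContinuous μ f
  have := isProbabilityMeasure_tilted hexp
  have hf : Integrable f (μ.tilted f) := by
    rw [integrable_tilted_iff hexp]
    simpa [smul_eq_mul, mul_comm] using hfexp
  rw [KLdiv, if_pos hac, integral_rnDeriv_mul_log hac,
    integral_congr_ae (hac.ae_le (log_rnDeriv_tilted_left_self hexp) :
      llr (μ.tilted f) μ =ᵐ[μ.tilted f] _),
    integral_sub hf (integrable_const _), integral_const, probReal_univ, one_smul, integral_tilted]
  simp_rw [smul_eq_mul, div_mul_eq_mul_div, integral_div, mul_comm (exp _)]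

section

variable {Y : Ω → ℝ} {c : ℝ}

lemma ae_mul_sub_nonpos_of_ae_le (hYc : ∀ᵐ ω ∂μ, Y ω ≤ c) {s : ℝ} (hs : 0 ≤ s) :
    ∀ᵐ ω ∂μ, s * (Y ω - c) ≤ 0 :=
  hYc.mono fun _ hω ↦ mul_nonpos_of_nonneg_of_nonpos hs (sub_nonpos.2 hω)

variable [IsFiniteMeasure μ]

lemma tendsto_integral_exp_mul_sub_atTop (hY : Measurable Y) (hYc : ∀ᵐ ω ∂μ, Y ω ≤ c) :
    Tendsto (fun s : ℝ ↦ ∫ ω, exp (s * (Y ω - c)) ∂μ) atTop (nhds (μ.real {ω | Y ω = c})) := by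
  have hmeas : MeasurableSet {ω | Y ω = c} := hY (measurableSet_singleton c)
  rw [← integral_indicator_one hmeas]
  refine tendsto_integral_filter_of_dominated_convergence (fun _ ↦ 1)
    (Eventually.of_forall fun s ↦ by fun_prop) ?_ (integrable_const 1) ?_
  · filter_upwards [eventually_ge_atTop 0] with s hs
    filter_upwards [ae_mul_sub_nonpos_of_ae_le hYc hs] with ω hω
    rwa [norm_of_nonneg (exp_pos _).le, exp_le_one_iff]
  · filter_upwards [hYc] with ω hω
    rcases hω.lt_or_eq with hlt | heq
    · rw [indicator_of_notMem (s := {ω | Y ω = c}) hlt.ne]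
      exact tendsto_exp_atBot.comp (tendsto_id.atTop_mul_const_of_neg (sub_neg.2 hlt))
    · simp [heq]

lemma tendsto_integral_mul_sub_mul_exp_atTop (hY : Measurable Y) (hYc : ∀ᵐ ω ∂μ, Y ω ≤ c) :
    Tendsto (fun s : ℝ ↦ ∫ ω, s * (Y ω - c) * exp (s * (Y ω - c)) ∂μ) atTop (nhds 0) := by
  rw [← integral_zero Ω ℝ]
  refine tendsto_integral_filter_of_dominated_convergence (fun _ ↦ exp (-1))
    (Eventually.of_forall fun s ↦ by fun_prop) ?_ (integrable_const _) ?_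
  · filter_upwards [eventually_ge_atTop 0] with s hs
    filter_upwards [ae_mul_sub_nonpos_of_ae_le hYc hs] with ω hω
    exact abs_mul_exp_le_exp_neg_one hω
  · filter_upwards [hYc] with ω hω
    rcases hω.lt_or_eq with hlt | heq
    · exact tendsto_mul_exp_atBot_nhds_zero.comp
        (tendsto_id.atTop_mul_const_of_neg (sub_neg.2 hlt))
    · simp [heq]

lemma KLdiv_tilted_mul_eq [NeZero μ] (hY : Measurable Y) (hYc : ∀ᵐ ω ∂μ, Y ω ≤ c) {s : ℝ}
    (hs : 0 ≤ s) :
    KLdiv (μ.tilted fun ω ↦ s * Y ω) μ =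
      (((∫ ω, s * (Y ω - c) * exp (s * (Y ω - c)) ∂μ) / ∫ ω, exp (s * (Y ω - c)) ∂μ
        - log (∫ ω, exp (s * (Y ω - c)) ∂μ) : ℝ) : EReal) := by
  have hshift : (fun ω ↦ s * Y ω) = fun ω ↦ s * (Y ω - c) + s * c := by ext; ring
  have hle := ae_mul_sub_nonpos_of_ae_le hYc hs
  rw [hshift, tilted_add_const, KLdiv_tilted_self]
  · refine Integrable.of_bound (by fun_prop) 1 (hle.mono fun ω hω ↦ ?_)
    rwa [norm_of_nonneg (exp_pos _).le, exp_le_one_iff]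
  · exact Integrable.of_bound (by fun_prop) (exp (-1))
      (hle.mono fun ω hω ↦ abs_mul_exp_le_exp_neg_one hω)

end

end MeasureTheory

/-- As `s → +∞`, the KL divergence of the exponentially tilted measure
`dQ^s/dP = e^{sY}/E_P[e^{sY}]` from `P` tends to `log (1/π)`, where
`π = P(Y = esssup Y) > 0`. -/
theorem klDiv_tilted_tendsto_log_inv_pi
    {Ω : Type*} [MeasurableSpace Ω] (P : Measure Ω) [IsProbabilityMeasure P]
    (Y : Ω → ℝ) (hY : Measurable Y) (hbd : ∃ C : ℝ, ∀ ω, |Y ω| ≤ C)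
    (hπ : 0 < P {ω | Y ω = essSup Y P}) :
    Tendsto (fun s : ℝ => KLdiv (P.tilted fun ω => s * Y ω) P) atTop
      (nhds ((Real.log (1 / (P {ω | Y ω = essSup Y P}).toReal) : ℝ) : EReal)) := by
  obtain ⟨C, hC⟩ := hbd
  set M := essSup Y P
  have hYM : ∀ᵐ ω ∂P, Y ω ≤ M :=
    ae_le_essSup (isBoundedUnder_of ⟨C, fun ω ↦ (abs_le.mp (hC ω)).2⟩)
  have hπ_real : 0 < P.real {ω | Y ω = M} := ENNReal.toReal_pos hπ.ne' (measure_ne_top P _)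
  have hA := tendsto_integral_exp_mul_sub_atTop hY hYM
  have hlim := ((tendsto_integral_mul_sub_mul_exp_atTop hY hYM).div hA hπ_real.ne').sub
    (((continuousAt_log hπ_real.ne').tendsto).comp hA)
  rw [zero_div, zero_sub, ← log_inv, ← one_div] at hlim
  refine ((continuous_coe_real_ereal.tendsto _).comp hlim).congr' ?_
  filter_upwards [eventually_ge_atTop 0] with s hs
  exact (KLdiv_tilted_mul_eq hY hYM hs).symm
end

section
/- Let (Ω, 𝓕, P) be a probability space and U : Ω → ℝ a bounded measurable random variable that is not P-almost surely constant. For η ∈ ℝ let Q^η be the exponentially tilted probability measure with density dQ^η/dP = e^{ηU} / E_P[e^{ηU}]. Then the map η ↦ D_KL(Q^η ‖ P) is strictly increasing on (0, ∞). -/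
open MeasureTheory Real Filter Set Classical

/-!
With `Λ(η) = log E_P[e^{ηU}]` and `m(η) = E_{Q^η}[U]`, one has `D_KL(Q^η ‖ P) = η m(η) - Λ(η)`.
Jensen's inequality for `exp` under `Q^s`, strict because `U` is not a.s. constant, gives the
strict tangent-line inequality `(t - s) m(s) < Λ(t) - Λ(s)` for `s ≠ t`. Used for `(a, b)` and
`(b, a)` with `0 < a < b` it yields `m(a) < m(b)` and then
`D_KL(Q^b ‖ P) - D_KL(Q^a ‖ P) > b m(b) - a m(a) - (b - a) m(b) = a (m(b) - m(a)) > 0`.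
-/

open ProbabilityTheory

section

variable {Ω : Type*} [MeasurableSpace Ω]

lemma integrable_of_abs_le {μ : Measure Ω} [IsFiniteMeasure μ] {f : Ω → ℝ} (hf : Measurable f)
    {C : ℝ} (hC : ∀ ω, |f ω| ≤ C) : Integrable f μ :=
  .of_bound hf.aestronglyMeasurable C (.of_forall hC)

lemma integral_lt_log_integral_exp {μ : Measure Ω} [IsProbabilityMeasure μ] {g : Ω → ℝ}
    (hg : Integrable g μ) (hexp : Integrable (fun ω => exp (g ω)) μ)
    (hnc : ¬ ∃ c : ℝ, ∀ᵐ ω ∂μ, g ω = c) :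
    ∫ ω, g ω ∂μ < log (∫ ω, exp (g ω) ∂μ) := by
  rcases strictConvexOn_exp.ae_eq_const_or_map_average_lt continuous_exp.continuousOn
      isClosed_univ (.of_forall fun _ => mem_univ _) hg hexp with hconst | hlt
  · exact absurd ⟨_, hconst⟩ hnc
  · rw [lt_log_iff_exp_lt (integral_exp_pos hexp)]
    simpa [average_eq_integral] using hlt

variable {P : Measure Ω}

/-- Strict Jensen for `exp` under the tilted measure `P.tilted f`, read back under `P`. -/
lemma integral_tilted_lt_log_sub [IsFiniteMeasure P] [NeZero P] {f g : Ω → ℝ}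
    (hf : Integrable (fun ω => exp (f ω)) P) (hfg : Integrable (fun ω => exp (f ω + g ω)) P)
    (hg : Integrable g (P.tilted f)) (hnc : ¬ ∃ c : ℝ, ∀ᵐ ω ∂P, g ω = c) :
    ∫ ω, g ω ∂(P.tilted f) <
      log (∫ ω, exp (f ω + g ω) ∂P) - log (∫ ω, exp (f ω) ∂P) := by
  have := isProbabilityMeasure_tilted hf
  have hexp : ∫ ω, exp (g ω) ∂(P.tilted f) = (∫ ω, exp (f ω + g ω) ∂P) / ∫ ω, exp (f ω) ∂P :=
    integral_exp_tilted f g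
  have hexp_int : Integrable (fun ω => exp (g ω)) (P.tilted f) := by
    rw [integrable_tilted_iff hf]
    simpa only [smul_eq_mul, ← exp_add] using hfg
  have hnc' : ¬ ∃ c : ℝ, ∀ᵐ ω ∂(P.tilted f), g ω = c := fun ⟨c, hc⟩ =>
    hnc ⟨c, (absolutelyContinuous_tilted hf).ae_le hc⟩
  calc ∫ ω, g ω ∂(P.tilted f) < log (∫ ω, exp (g ω) ∂(P.tilted f)) :=
        integral_lt_log_integral_exp hg hexp_int hnc'
    _ = _ := by
      rw [hexp, log_div (integral_exp_pos hfg).ne' (integral_exp_pos hf).ne']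

lemma KLdiv_tilted_eq [SigmaFinite P] [NeZero P] {f : Ω → ℝ}
    (hf : Integrable (fun ω => exp (f ω)) P) (hf' : Integrable f (P.tilted f)) :
    KLdiv (P.tilted f) P = ((∫ ω, f ω ∂(P.tilted f) - log (∫ ω, exp (f ω) ∂P) : ℝ) : EReal) := by
  have := isProbabilityMeasure_tilted hf
  have hac := tilted_absolutelyContinuous P f
  rw [KLdiv, if_pos hac, integral_rnDeriv_mul_log hac, llr_def,
    integral_congr_ae (hac.ae_le (log_rnDeriv_tilted_left_self hf)),
    integral_sub hf' (integrable_const _), integral_const, probReal_univ, one_smul]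

variable {U : Ω → ℝ} {C : ℝ}

lemma integrable_exp_mul_of_abs_le [IsFiniteMeasure P] (hU : Measurable U) (hC : ∀ ω, |U ω| ≤ C)
    (t : ℝ) : Integrable (fun ω => exp (t * U ω)) P := by
  refine integrable_of_abs_le (hU.const_mul t).exp (C := exp (|t| * C)) fun ω => ?_
  rw [abs_of_pos (exp_pos _), exp_le_exp]
  calc t * U ω ≤ |t| * |U ω| := (le_abs_self _).trans (abs_mul _ _).le
    _ ≤ |t| * C := by gcongr; exact hC ω

variable [IsProbabilityMeasure P]

lemma KLdiv_tilted_mul_eq (hU : Measurable U) (hC : ∀ ω, |U ω| ≤ C) (η : ℝ) :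
    KLdiv (P.tilted (η * U ·)) P = ((η * (P.tilted (η * U ·))[U] - cgf U P η : ℝ) : EReal) := by
  rw [KLdiv_tilted_eq (integrable_exp_mul_of_abs_le hU hC η)
    ((integrable_of_abs_le hU hC).const_mul η), integral_const_mul]
  rfl

lemma sub_mul_integral_tilted_lt_cgf_sub (hU : Measurable U) (hC : ∀ ω, |U ω| ≤ C)
    (hnc : ¬ ∃ c : ℝ, ∀ᵐ ω ∂P, U ω = c) {s t : ℝ} (hst : s ≠ t) :
    (t - s) * (P.tilted (s * U ·))[U] < cgf U P t - cgf U P s := by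
  have hnc' : ¬ ∃ c : ℝ, ∀ᵐ ω ∂P, (t - s) * U ω = c := fun ⟨c, hc⟩ =>
    hnc ⟨c / (t - s), hc.mono fun ω hω => by
      rw [eq_div_iff (sub_ne_zero.2 hst.symm), ← hω, mul_comm]⟩
  have hexp_add : (fun ω => exp (s * U ω + (t - s) * U ω)) = fun ω => exp (t * U ω) := by
    ext ω; ring_nf
  have key := integral_tilted_lt_log_sub (integrable_exp_mul_of_abs_le hU hC s)
    (hexp_add ▸ integrable_exp_mul_of_abs_le hU hC t)
    ((integrable_of_abs_le hU hC).const_mul (t - s)) hnc'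
  rwa [integral_const_mul, hexp_add] at key

end

/-- For a bounded random variable `U` that is not `P`-a.s. constant, the map
`η ↦ D_KL(Q^η ‖ P)` is strictly increasing on `(0, ∞)`, where `Q^η` is the exponential
tilting of `P` by `ηU`. -/
theorem klDiv_tilted_strictMonoOn
    {Ω : Type*} [MeasurableSpace Ω] (P : Measure Ω) [IsProbabilityMeasure P]
    (U : Ω → ℝ) (hU : Measurable U) (hbd : ∃ C : ℝ, ∀ ω, |U ω| ≤ C)
    (hnc : ¬ ∃ c : ℝ, ∀ᵐ ω ∂P, U ω = c) :
    StrictMonoOn (fun η : ℝ => KLdiv (P.tilted fun ω => η * U ω) P) (Set.Ioi 0) := by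
  obtain ⟨C, hC⟩ := hbd
  intro a (ha : 0 < a) b _ hab
  simp only [KLdiv_tilted_mul_eq hU hC, EReal.coe_lt_coe_iff]
  set m : ℝ → ℝ := fun η => (P.tilted (η * U ·))[U]
  have hab_tangent : (b - a) * m a < cgf U P b - cgf U P a :=
    sub_mul_integral_tilted_lt_cgf_sub hU hC hnc hab.ne
  have hba_tangent : (a - b) * m b < cgf U P a - cgf U P b :=
    sub_mul_integral_tilted_lt_cgf_sub hU hC hnc hab.ne'
  have hm : m a < m b := lt_of_mul_lt_mul_left (by linarith) (sub_pos.2 hab).le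
  linarith [mul_lt_mul_of_pos_left hm ha]
end

section
/- Let (Ω, 𝓕, P) be a probability space and U : Ω → ℝ a bounded measurable random variable that is not P-almost surely constant, with π := P(U = esssup U) > 0. For η > 0 let Q^η be the exponentially tilted probability measure with density dQ^η/dP = e^{ηU} / E_P[e^{ηU}]. Then for every ε with 0 < ε < log(1/π) there exists a unique η* > 0 such that D_KL(Q^{η*} ‖ P) = ε. -/
open MeasureTheory Real Filter Set Classical

/-!
With `Λ` the cumulant generating function of `U`, the divergence of the tilted measure is
`D(η) = η Λ'(η) - Λ(η)`. Its derivative `η Λ''(η)` is `η` times the variance of `U` under the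
tilted measure, which is positive since `U` is not a.s. constant; so `D` increases strictly from
`D(0) = 0`. Tilting by `η U` and by `η (U - esssup U)` give the same measure, and for the latter
dominated convergence yields `E[e^{η (U - esssup U)}] → π` and
`E[η (U - esssup U) e^{η (U - esssup U)}] → 0`, hence `D(η) → log (1/π)`. The intermediate value
theorem concludes.
-/

open ProbabilityTheory Topology

lemma MeasureTheory.tilted_add_const_s7 {α : Type*} [MeasurableSpace α] (μ : Measure α)
    (f : α → ℝ) (c : ℝ) : μ.tilted (fun x => f x + c) = μ.tilted f := by
  simp only [Measure.tilted, exp_add, integral_mul_const, mul_div_mul_right _ _ (exp_ne_zero c)]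

lemma KLdiv_tilted_self {Ω : Type*} [MeasurableSpace Ω] {P : Measure Ω} [SigmaFinite P]
    {f : Ω → ℝ} (hf : AEMeasurable f P) :
    KLdiv (P.tilted f) P = ((∫ ω, (f ω - log (∫ x, exp (f x) ∂P)) ∂(P.tilted f) : ℝ) : EReal) := by
  rw [KLdiv, if_pos (tilted_absolutelyContinuous P f), integral_tilted]
  congr 1
  refine integral_congr_ae ?_
  filter_upwards [rnDeriv_tilted_left_self hf] with ω hω
  rw [hω, ENNReal.toReal_ofReal (by positivity), smul_eq_mul]
  rcases eq_or_ne (∫ x, exp (f x) ∂P) 0 with hZ | hZ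
  · simp [hZ]
  · rw [log_div (exp_ne_zero _) hZ, log_exp]

lemma existsUnique_pos_eq_of_strictMonoOn {f : ℝ → ℝ} {L ε : ℝ} (hf : ContinuousOn f (Ici 0))
    (hmono : StrictMonoOn f (Ici 0)) (h0 : f 0 = 0) (hL : Tendsto f atTop (𝓝 L))
    (hε0 : 0 < ε) (hεL : ε < L) : ∃! η, 0 < η ∧ f η = ε := by
  obtain ⟨b, hfb, hb⟩ :=
    ((hL.eventually (eventually_gt_nhds hεL)).and (eventually_gt_atTop 0)).exists
  have hε : ε ∈ Ioo (f 0) (f b) := by rw [h0]; exact ⟨hε0, hfb⟩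
  obtain ⟨η, hη, hfη⟩ := intermediate_value_Ioo hb.le (hf.mono Icc_subset_Ici_self) hε
  exact ⟨η, ⟨hη.1, hfη⟩, fun y ⟨hy, hfy⟩ => hmono.injOn hy.le hη.1.le (hfy.trans hfη.symm)⟩

lemma Real.abs_mul_exp_le_one {x : ℝ} (hx : x ≤ 0) : |x * exp x| ≤ 1 := by
  rw [abs_mul, abs_exp, abs_of_nonpos hx]
  calc -x * exp x ≤ exp (-x) * exp x := by gcongr; linarith [add_one_le_exp (-x)]
    _ = 1 := by rw [← exp_add, neg_add_cancel, exp_zero]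

lemma Real.tendsto_mul_exp_atBot : Tendsto (fun x : ℝ => x * exp x) atBot (𝓝 0) := by
  simpa [Function.comp_def] using
    ((tendsto_pow_mul_exp_neg_atTop_nhds_zero 1).comp tendsto_neg_atBot_atTop).neg

namespace ProbabilityTheory

noncomputable def tiltKL {Ω : Type*} [MeasurableSpace Ω] (X : Ω → ℝ) (μ : Measure Ω) (t : ℝ) :
    ℝ :=
  t * deriv (cgf X μ) t - cgf X μ t

variable {Ω : Type*} [MeasurableSpace Ω] {μ : Measure Ω} {X : Ω → ℝ} {t : ℝ}

lemma mem_interior_integrableExpSet (h : ∀ t, Integrable (fun ω => exp (t * X ω)) μ) (t : ℝ) :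
    t ∈ interior (integrableExpSet X μ) := by
  simp [integrableExpSet, h]

lemma tendsto_integral_comp_mul_atTop [IsFiniteMeasure μ] {g : ℝ → ℝ} {B : ℝ}
    (hg : Continuous g) (hgB : ∀ x ≤ 0, |g x| ≤ B) (hg_bot : Tendsto g atBot (𝓝 0))
    (hX : Measurable X) (hX0 : ∀ᵐ ω ∂μ, X ω ≤ 0) :
    Tendsto (fun t => ∫ ω, g (t * X ω) ∂μ) atTop (𝓝 (μ.real {ω | X ω = 0} * g 0)) := by
  have hS : MeasurableSet {ω | X ω = 0} := hX (measurableSet_singleton 0)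
  rw [← smul_eq_mul, ← integral_indicator_const (g 0) hS]
  refine tendsto_integral_filter_of_dominated_convergence (fun _ => B)
    (.of_forall fun t => (hg.measurable.comp (hX.const_mul t)).aestronglyMeasurable) ?_
    (integrable_const B) ?_
  · filter_upwards [eventually_ge_atTop 0] with t ht
    filter_upwards [hX0] with ω hω
    exact hgB _ (mul_nonpos_of_nonneg_of_nonpos ht hω)
  · filter_upwards [hX0] with ω hω
    rcases hω.eq_or_lt with h0 | hneg
    · simp [h0]
    · rw [indicator_of_notMem (show ω ∉ {ω | X ω = 0} from hneg.ne)]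
      exact hg_bot.comp (tendsto_id.atTop_mul_const_of_neg hneg)

lemma KLdiv_tilted_mul [IsProbabilityMeasure μ] (ht : t ∈ interior (integrableExpSet X μ)) :
    KLdiv (μ.tilted (t * X ·)) μ = tiltKL X μ t := by
  have := isProbabilityMeasure_tilted (interior_subset (s := integrableExpSet X μ) ht)
  have hX : Integrable X (μ.tilted (t * X ·)) := (memLp_tilted_mul ht 1).integrable le_rfl
  rw [KLdiv_tilted_self ((aemeasurable_of_mem_interior_integrableExpSet ht).const_mul t),
    integral_sub (hX.const_mul t) (integrable_const _), integral_const_mul,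
    integral_tilted_mul_self ht, integral_const]
  simp [tiltKL, cgf, mgf]

lemma tiltKL_zero [IsZeroOrProbabilityMeasure μ] : tiltKL X μ 0 = 0 := by
  rw [tiltKL, zero_mul, cgf_zero, sub_zero]

lemma hasDerivAt_tiltKL (ht : t ∈ interior (integrableExpSet X μ)) :
    HasDerivAt (tiltKL X μ) (t * iteratedDeriv 2 (cgf X μ) t) t := by
  have hΛ := analyticAt_cgf ht
  have hΛ' : HasDerivAt (deriv (cgf X μ)) (iteratedDeriv 2 (cgf X μ) t) t := by
    rw [iteratedDeriv_succ, iteratedDeriv_one]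
    exact hΛ.deriv.differentiableAt.hasDerivAt
  exact (((hasDerivAt_id' t).mul hΛ').sub hΛ.differentiableAt.hasDerivAt).congr_deriv (by ring)

lemma iteratedDeriv_two_cgf_pos [IsProbabilityMeasure μ]
    (ht : t ∈ interior (integrableExpSet X μ)) (hX : ¬ ∃ c, ∀ᵐ ω ∂μ, X ω = c) :
    0 < iteratedDeriv 2 (cgf X μ) t := by
  have hint := interior_subset (s := integrableExpSet X μ) ht
  have := isProbabilityMeasure_tilted hint
  rw [← variance_tilted_mul ht]
  refine (variance_nonneg _ _).lt_of_ne' fun h0 => hX ⟨(μ.tilted (t * X ·))[X], ?_⟩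
  exact absolutelyContinuous_tilted hint
    (ae_eq_integral_of_variance_eq_zero (memLp_tilted_mul ht 2) h0)

lemma continuous_tiltKL (h : ∀ t, Integrable (fun ω => exp (t * X ω)) μ) :
    Continuous (tiltKL X μ) :=
  continuous_iff_continuousAt.2 fun t =>
    (hasDerivAt_tiltKL (mem_interior_integrableExpSet h t)).continuousAt

lemma strictMonoOn_tiltKL [IsProbabilityMeasure μ]
    (h : ∀ t, Integrable (fun ω => exp (t * X ω)) μ) (hX : ¬ ∃ c, ∀ᵐ ω ∂μ, X ω = c) :
    StrictMonoOn (tiltKL X μ) (Ici 0) := by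
  refine strictMonoOn_of_deriv_pos (convex_Ici 0) (continuous_tiltKL h).continuousOn
    fun t ht => ?_
  rw [interior_Ici, mem_Ioi] at ht
  rw [(hasDerivAt_tiltKL (mem_interior_integrableExpSet h t)).deriv]
  exact mul_pos ht (iteratedDeriv_two_cgf_pos (mem_interior_integrableExpSet h t) hX)

lemma tiltKL_eq_integral_div_sub_log (ht : t ∈ interior (integrableExpSet X μ)) :
    tiltKL X μ t = (∫ ω, t * X ω * exp (t * X ω) ∂μ) / (∫ ω, exp (t * X ω) ∂μ)
      - log (∫ ω, exp (t * X ω) ∂μ) := by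
  simp_rw [tiltKL, deriv_cgf ht, cgf, mgf, mul_assoc, integral_const_mul, mul_div_assoc]

lemma tendsto_tiltKL_atTop [IsProbabilityMeasure μ]
    (h : ∀ t, Integrable (fun ω => exp (t * X ω)) μ) (hX : Measurable X)
    (hX0 : ∀ᵐ ω ∂μ, X ω ≤ 0) (hπ : μ {ω | X ω = 0} ≠ 0) :
    Tendsto (tiltKL X μ) atTop (𝓝 (-log (μ.real {ω | X ω = 0}))) := by
  have hπ' : μ.real {ω | X ω = 0} ≠ 0 := ENNReal.toReal_ne_zero.2 ⟨hπ, measure_ne_top _ _⟩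
  have hZ := tendsto_integral_comp_mul_atTop continuous_exp
    (fun x hx => by rw [abs_exp, exp_le_one_iff]; exact hx) tendsto_exp_atBot hX hX0
  have hN := tendsto_integral_comp_mul_atTop (g := fun x => x * exp x) (by fun_prop)
    (fun x hx => Real.abs_mul_exp_le_one hx) Real.tendsto_mul_exp_atBot hX hX0
  rw [exp_zero, mul_one] at hZ
  rw [zero_mul, mul_zero] at hN
  convert (hN.div hZ hπ').sub ((continuousAt_log hπ').tendsto.comp hZ) using 1
  · exact funext fun t => tiltKL_eq_integral_div_sub_log (mem_interior_integrableExpSet h t)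
  · simp

end ProbabilityTheory

/-- For a bounded, non-a.s.-constant random variable `U` with `π = P(U = esssup U) > 0`,
and any `0 < ε < log(1/π)`, there is a unique `η* > 0` with `D_KL(Q^{η*} ‖ P) = ε`,
where `Q^η` is the exponential tilting of `P` by `ηU`. -/
theorem exists_unique_tilt_parameter
    {Ω : Type*} [MeasurableSpace Ω] (P : Measure Ω) [IsProbabilityMeasure P]
    (U : Ω → ℝ) (hU : Measurable U) (hbd : ∃ C : ℝ, ∀ ω, |U ω| ≤ C)
    (hnc : ¬ ∃ c : ℝ, ∀ᵐ ω ∂P, U ω = c)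
    (hπ : 0 < P {ω | U ω = essSup U P})
    (ε : ℝ) (hε0 : 0 < ε)
    (hεlt : ε < Real.log (1 / (P {ω | U ω = essSup U P}).toReal)) :
    ∃! η : ℝ, 0 < η ∧ KLdiv (P.tilted fun ω => η * U ω) P = (ε : EReal) := by
  obtain ⟨C, hC⟩ := hbd
  set M := essSup U P
  set W : Ω → ℝ := fun ω => U ω - M with hW_def
  have hW : Measurable W := hU.sub_const M
  have hWint : ∀ t, Integrable (fun ω => exp (t * W ω)) P := fun t =>
    integrable_exp_mul_of_mem_Icc hW.aemeasurable (ae_of_all _ fun ω =>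
      ⟨sub_le_sub_right (abs_le.1 (hC ω)).1 M, sub_le_sub_right (abs_le.1 (hC ω)).2 M⟩)
  have hKL : ∀ η, KLdiv (P.tilted fun ω => η * U ω) P = tiltKL W P η := fun η => by
    have hshift : (fun ω => η * U ω) = fun ω => η * W ω + η * M := by
      funext ω; rw [hW_def]; ring
    rw [hshift, tilted_add_const_s7, KLdiv_tilted_mul (mem_interior_integrableExpSet hWint η)]
  have hW0 : ∀ᵐ ω ∂P, W ω ≤ 0 := by
    filter_upwards [ae_le_essSup (isBoundedUnder_of ⟨C, fun ω => (abs_le.1 (hC ω)).2⟩)]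
      with ω hω using sub_nonpos.2 hω
  have hWnc : ¬ ∃ c, ∀ᵐ ω ∂P, W ω = c := fun ⟨c, hc⟩ =>
    hnc ⟨c + M, hc.mono fun ω hω => eq_add_of_sub_eq hω⟩
  have hWM : {ω | W ω = 0} = {ω | U ω = M} := by ext; simp [hW_def, sub_eq_zero]
  simp_rw [hKL, EReal.coe_eq_coe_iff]
  rw [one_div, log_inv, ← measureReal_def, ← hWM] at hεlt
  exact existsUnique_pos_eq_of_strictMonoOn (continuous_tiltKL hWint).continuousOn
    (strictMonoOn_tiltKL hWint hWnc) tiltKL_zero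
    (tendsto_tiltKL_atTop hWint hW hW0 (hWM ▸ hπ.ne')) hε0 hεlt
end

section
/- Let (Ω, 𝓕, P) be a probability space, Y : Ω → ℝ a bounded measurable random variable, ε ≥ 0, and Q_ε the set of probability measures Q with P ≪ Q and D_KL(Q ‖ P) ≤ ε. Let S : ℝ × ℝ → [0, ∞) be a scoring function that is positively homogeneous of degree b for some b ∈ ℝ, i.e. S(cz, cy) = c^b S(z, y) for all z, y and all c > 0. Then the robust elicitable functional is positively homogeneous of degree 1: for every c > 0, argmin_{z ∈ ℝ} sup_{Q ∈ Q_ε} E_Q[S(z, cY)] = c · (argmin_{z ∈ ℝ} sup_{Q ∈ Q_ε} E_Q[S(z, Y)]), as an equality of subsets of ℝ. -/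
open MeasureTheory Real Filter Set Classical Pointwise

/-- The worst-case expected score over the KL uncertainty set
`Q_ε = {Q | P ≪ Q, D_KL(Q ‖ P) ≤ ε}`. -/
noncomputable def worstScore {Ω : Type*} [MeasurableSpace Ω] (P : Measure Ω) (ε : ℝ)
    (f : Ω → ℝ) : ℝ :=
  sSup {r : ℝ | ∃ Q : Measure Ω, IsProbabilityMeasure Q ∧ P ≪ Q
    ∧ KLdiv Q P ≤ (ε : EReal) ∧ r = ∫ ω, f ω ∂Q}

/-- Positive homogeneity of the robust elicitable functional: if the scoring function is
positively homogeneous of degree `b`, i.e. `S (c z) (c y) = c^b S z y` for all `c > 0`,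
then the argmin set of the worst-case expected score scales by `c`:
`argmin_z sup_{Q ∈ Q_ε} E_Q[S(z, cY)] = c • argmin_z sup_{Q ∈ Q_ε} E_Q[S(z, Y)]`. -/
theorem REF_positively_homogeneous
    {Ω : Type*} [MeasurableSpace Ω] (P : Measure Ω) [IsProbabilityMeasure P]
    (Y : Ω → ℝ) (hY : Measurable Y) (hbd : ∃ C : ℝ, ∀ ω, |Y ω| ≤ C)
    (ε : ℝ) (hε : 0 ≤ ε)
    (S : ℝ → ℝ → ℝ) (hS_meas : Measurable (Function.uncurry S))
    (hS_nonneg : ∀ z y, 0 ≤ S z y)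
    (b : ℝ) (hhom : ∀ (z y : ℝ) (c : ℝ), 0 < c → S (c * z) (c * y) = c ^ b * S z y) :
    ∀ c : ℝ, 0 < c →
      {z : ℝ | ∀ w : ℝ, worstScore P ε (fun ω => S z (c * Y ω))
          ≤ worstScore P ε (fun ω => S w (c * Y ω))}
        = (fun a => c * a) ''
          {z : ℝ | ∀ w : ℝ, worstScore P ε (fun ω => S z (Y ω))
            ≤ worstScore P ε (fun ω => S w (Y ω))} := by
  intro c hc
  -- worstScore scales under nonneg constants
  have hws : ∀ (k : ℝ), 0 ≤ k → ∀ f : Ω → ℝ,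
      worstScore P ε (fun ω => k * f ω) = k * worstScore P ε f := by
    intro k hk f
    unfold worstScore
    have hset : {r : ℝ | ∃ Q : Measure Ω, IsProbabilityMeasure Q ∧ P ≪ Q
        ∧ KLdiv Q P ≤ (ε : EReal) ∧ r = ∫ ω, k * f ω ∂Q}
        = k • {r : ℝ | ∃ Q : Measure Ω, IsProbabilityMeasure Q ∧ P ≪ Q
        ∧ KLdiv Q P ≤ (ε : EReal) ∧ r = ∫ ω, f ω ∂Q} := by
      ext r
      simp only [Set.mem_smul_set, Set.mem_setOf_eq]
      constructor
      · rintro ⟨Q, h1, h2, h3, rfl⟩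
        exact ⟨∫ ω, f ω ∂Q, ⟨Q, h1, h2, h3, rfl⟩, (integral_const_mul k f).symm⟩
      · rintro ⟨x, ⟨Q, h1, h2, h3, rfl⟩, rfl⟩
        exact ⟨Q, h1, h2, h3, (integral_const_mul k f).symm⟩
    rw [hset, Real.sSup_smul_of_nonneg hk, smul_eq_mul]
  have hcb : (0:ℝ) < c ^ b := Real.rpow_pos_of_pos hc b
  -- rewrite the scaled score
  have key : ∀ z : ℝ, worstScore P ε (fun ω => S z (c * Y ω))
      = c ^ b * worstScore P ε (fun ω => S (z / c) (Y ω)) := by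
    intro z
    have : (fun ω => S z (c * Y ω)) = fun ω => c ^ b * S (z / c) (Y ω) := by
      funext ω
      rw [← hhom (z / c) (Y ω) c hc, mul_div_cancel₀ _ hc.ne']
    rw [this, hws _ hcb.le]
  ext z
  simp only [Set.mem_setOf_eq, Set.mem_image]
  constructor
  · intro h
    refine ⟨z / c, ?_, mul_div_cancel₀ _ hc.ne'⟩
    intro w
    have := h (c * w)
    rw [key, key, mul_div_cancel_left₀ w hc.ne'] at this
    · exact le_of_mul_le_mul_left this hcb
  · rintro ⟨x, hx, rfl⟩
    intro w
    rw [key, key, mul_div_cancel_left₀ x hc.ne']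
    exact mul_le_mul_of_nonneg_left (hx (w / c)) hcb.le
end

section
/- Let (Ω, 𝓕, P) be a probability space, Y : Ω → ℝ a bounded measurable random variable, ε ≥ 0, and Q_ε the set of probability measures Q with P ≪ Q and D_KL(Q ‖ P) ≤ ε. Let S : ℝ × ℝ → [0, ∞) be a scoring function satisfying S(z − c, y) = S(z, y + c) for all z, y, c ∈ ℝ. Then the robust elicitable functional is translation invariant: for every c ∈ ℝ, argmin_{z ∈ ℝ} sup_{Q ∈ Q_ε} E_Q[S(z, Y + c)] = (argmin_{z ∈ ℝ} sup_{Q ∈ Q_ε} E_Q[S(z, Y)]) + c, as an equality of subsets of ℝ. -/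
open MeasureTheory Real Filter Set Classical

/-- Translation invariance of the robust elicitable functional: if the scoring function
satisfies `S (z - c) y = S z (y + c)` for all `z, y, c ∈ ℝ`, then the argmin set of the
worst-case expected score translates:
`argmin_z sup_{Q ∈ Q_ε} E_Q[S(z, Y + c)] = (argmin_z sup_{Q ∈ Q_ε} E_Q[S(z, Y)]) + c`. -/
theorem REF_translation_invariant
    {Ω : Type*} [MeasurableSpace Ω] (P : Measure Ω) [IsProbabilityMeasure P]
    (Y : Ω → ℝ) (hY : Measurable Y) (hbd : ∃ C : ℝ, ∀ ω, |Y ω| ≤ C)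
    (ε : ℝ) (hε : 0 ≤ ε)
    (S : ℝ → ℝ → ℝ) (hS_meas : Measurable (Function.uncurry S))
    (hS_nonneg : ∀ z y, 0 ≤ S z y)
    (htrans : ∀ z y c : ℝ, S (z - c) y = S z (y + c)) :
    ∀ c : ℝ,
      {z : ℝ | ∀ w : ℝ, worstScore P ε (fun ω => S z (Y ω + c))
          ≤ worstScore P ε (fun ω => S w (Y ω + c))}
        = (fun a => a + c) ''
          {z : ℝ | ∀ w : ℝ, worstScore P ε (fun ω => S z (Y ω))
            ≤ worstScore P ε (fun ω => S w (Y ω))} := by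
  intro c
  have key : ∀ z : ℝ, worstScore P ε (fun ω => S z (Y ω + c))
      = worstScore P ε (fun ω => S (z - c) (Y ω)) := by
    intro z
    have : (fun ω => S z (Y ω + c)) = fun ω => S (z - c) (Y ω) := by
      funext ω; rw [htrans]
    rw [this]
  ext z
  constructor
  · intro hz
    refine ⟨z - c, fun w => ?_, by ring⟩
    have := hz (w + c)
    rw [key, key] at this
    simpa using this
  · rintro ⟨a, ha, rfl⟩
    intro w
    rw [key, key]
    simpa using ha (w - c)
end

section
/- Let (Ω, 𝓕, P) be a probability space, Y : Ω → ℝ a bounded measurable random variable, ε ≥ 0, and Q_ε the set of probability measures Q with P ≪ Q and D_KL(Q ‖ P) ≤ ε. Let k ∈ ℕ and let S : ℝ^k × ℝ → [0, ∞) be a scoring function satisfying S(c·z, c·y) = c^b S(z, y) for all z ∈ ℝ^k, y ∈ ℝ, c > 0, and some b ≥ 0, where c·z denotes componentwise scaling. Then for every c > 0, argmin_{z ∈ ℝ^k} sup_{Q ∈ Q_ε} E_Q[S(z, cY)] = c · (argmin_{z ∈ ℝ^k} sup_{Q ∈ Q_ε} E_Q[S(z, Y)]), as an equality of subsets of ℝ^k.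 -/
open MeasureTheory Real Filter Set Classical

lemma sSup_mul_pos {s : Set ℝ} {k : ℝ} (hk : 0 < k) :
    sSup ((fun r => k * r) '' s) = k * sSup s := by
  rcases s.eq_empty_or_nonempty with rfl | hs
  · simp [Real.sSup_empty]
  by_cases hb : BddAbove s
  · exact (Monotone.map_csSup_of_continuousAt (by fun_prop)
      (fun x y hxy => by nlinarith) hs hb).symm
  · have hb' : ¬ BddAbove ((fun r => k * r) '' s) := by
      intro ⟨M, hM⟩
      exact hb ⟨M / k, fun x hx => by
        have := hM (mem_image_of_mem _ hx)
        rw [le_div_iff₀ hk]; linarith⟩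
    rw [Real.sSup_of_not_bddAbove hb, Real.sSup_of_not_bddAbove hb', mul_zero]

lemma worstScore_mul {Ω : Type*} [MeasurableSpace Ω] (P : Measure Ω) (ε : ℝ)
    {k : ℝ} (hk : 0 < k) (f : Ω → ℝ) :
    worstScore P ε (fun ω => k * f ω) = k * worstScore P ε f := by
  unfold worstScore
  rw [← sSup_mul_pos hk]
  congr 1
  ext r
  constructor
  · rintro ⟨Q, h1, h2, h3, rfl⟩
    exact ⟨∫ ω, f ω ∂Q, ⟨Q, h1, h2, h3, rfl⟩, (integral_const_mul k f).symm⟩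
  · rintro ⟨r', ⟨Q, h1, h2, h3, rfl⟩, rfl⟩
    exact ⟨Q, h1, h2, h3, (integral_const_mul k f).symm⟩

/-- Positive homogeneity of the `k`-dimensional robust elicitable functional: if the
scoring function `S : ℝ^k × ℝ → [0,∞)` satisfies `S (c • z) (c * y) = c^b * S z y` for all
`c > 0` and some `b ≥ 0`, then for every `c > 0` the argmin set of the worst-case expected
score for `cY` equals `c • ` the argmin set for `Y`. -/
theorem kREF_positively_homogeneous
    {Ω : Type*} [MeasurableSpace Ω] (P : Measure Ω) [IsProbabilityMeasure P]
    (Y : Ω → ℝ) (hY : Measurable Y) (hbd : ∃ C : ℝ, ∀ ω, |Y ω| ≤ C)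
    (ε : ℝ) (hε : 0 ≤ ε) (k : ℕ)
    (S : (Fin k → ℝ) → ℝ → ℝ) (hS_meas : Measurable (Function.uncurry S))
    (hS_nonneg : ∀ z y, 0 ≤ S z y)
    (b : ℝ) (hb : 0 ≤ b)
    (hhom : ∀ (z : Fin k → ℝ) (y : ℝ) (c : ℝ), 0 < c → S (c • z) (c * y) = c ^ b * S z y) :
    ∀ c : ℝ, 0 < c →
      {z : Fin k → ℝ | ∀ w : Fin k → ℝ, worstScore P ε (fun ω => S z (c * Y ω))
          ≤ worstScore P ε (fun ω => S w (c * Y ω))}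
        = (fun a : Fin k → ℝ => c • a) ''
          {z : Fin k → ℝ | ∀ w : Fin k → ℝ, worstScore P ε (fun ω => S z (Y ω))
            ≤ worstScore P ε (fun ω => S w (Y ω))} := by
  intro c hc
  have hcb : 0 < c ^ b := Real.rpow_pos_of_pos hc b
  have key : ∀ z : Fin k → ℝ, worstScore P ε (fun ω => S (c • z) (c * Y ω))
      = c ^ b * worstScore P ε (fun ω => S z (Y ω)) := by
    intro z
    rw [show (fun ω => S (c • z) (c * Y ω)) = fun ω => c ^ b * S z (Y ω) from
      funext fun ω => hhom z (Y ω) c hc, worstScore_mul P ε hcb]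
  have hcan : ∀ z : Fin k → ℝ, c • (c⁻¹ • z) = z := fun z => by
    rw [smul_smul, mul_inv_cancel₀ hc.ne', one_smul]
  ext z
  simp only [Set.mem_setOf_eq, Set.mem_image]
  constructor
  · intro hz
    refine ⟨c⁻¹ • z, fun w => ?_, hcan z⟩
    have h1 := hz (c • w)
    rw [← hcan z, key (c⁻¹ • z), key w] at h1
    exact le_of_mul_le_mul_left h1 hcb
  · rintro ⟨a, ha, rfl⟩ w
    have h1 := ha (c⁻¹ • w)
    rw [key a, ← hcan w, key (c⁻¹ • w)]
    exact mul_le_mul_of_nonneg_left h1 hcb.le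
end
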